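/- Suppose h ∂ₓ u ∈ L²(ℝ₊) and h^{σ₁} u ∈ L²(ℝ₊) for some 0 ≤ σ₁ ≤ 1. Then u ∈ L²(ℝ₊) and ‖u‖_{L²} ≲ ‖h ∂ₓ u‖_{L²} + ‖h^{σ₁} u‖_{L²}, with implicit constant depending only on h and σ₁. -/

import Mathlib

/- STATEMENT 5 (Corollary 6.2):
Suppose `h ∂ₓ u ∈ L²(ℝ₊)` and `h^{σ₁} u ∈ L²(ℝ₊)` for some `0 ≤ σ₁ ≤ 1`.
Then `u ∈ L²(ℝ₊)` and `‖u‖_{L²} ≲ ‖h ∂ₓ u‖_{L²} + ‖h^{σ₁} u‖_{L²}`,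
with implicit constant depending only on `h` and `σ₁`. -/

open MeasureTheory Real Set Filter
open scoped ENNReal

noncomputable section

/-- The standing assumptions on the depth function `h`. -/
def ShoreFn (h : ℝ → ℝ) : Prop :=
  ContDiffOn ℝ 1 h (Ici 0) ∧ (∃ M, ∀ x ∈ Ici (0:ℝ), |h x| ≤ M) ∧
    h 0 = 0 ∧ 0 < deriv h 0 ∧ (∀ x, 0 < x → 0 < h x) ∧ 0 < Filter.atTop.liminf h

open scoped Topology

/-! Near the shore `x ≤ c h(x)`, so `x u' ∈ L²` there. Integrating
`(x u²)' = u² + 2 x u u' ≥ u² / 2 - 2 (x u')²` over `(ε, y]` and letting `ε → 0` gives the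
Hardy-type bound `∫₀^y u² ≤ 2 y u(y)² + 4 ∫₀^y (x u')²`. Away from the shore `h` is bounded below by
a positive constant, so `|u| ≲ |h^σ₁ u|` there; taking for `y` a point of `(δ/2, δ]` where `u²` is
at most its mean bounds the boundary term `y u(y)²` by this far-field part as well. -/

theorem sq_le_mul_sq_of_abs_le {a b c : ℝ} (h : |a| ≤ c * |b|) : a ^ 2 ≤ c ^ 2 * b ^ 2 := by
  simpa only [sq_abs, mul_pow] using pow_le_pow_left₀ (abs_nonneg a) h 2

section Lp

variable {α : Type*} [MeasurableSpace α] {μ : Measure α}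

theorem integrable_and_integral_le_of_le_mul {f g : α → ℝ} {C : ℝ}
    (hf : AEStronglyMeasurable f μ) (hf₀ : 0 ≤ᵐ[μ] f) (hfg : ∀ᵐ x ∂μ, f x ≤ C * g x)
    (hg : Integrable g μ) : Integrable f μ ∧ ∫ x, f x ∂μ ≤ C * ∫ x, g x ∂μ := by
  have hf_int : Integrable f μ := by
    refine (hg.const_mul C).mono' hf ?_
    filter_upwards [hf₀, hfg] with x hx₀ hx
    rwa [Real.norm_of_nonneg hx₀]
  exact ⟨hf_int, (integral_mono_ae hf_int (hg.const_mul C) hfg).trans_eq (integral_const_mul _ _)⟩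

theorem integrable_sq_and_integral_sq_le_of_le_abs {u w : α → ℝ} {k : ℝ} (hk : 0 < k)
    (hw : ∀ᵐ x ∂μ, k ≤ |w x|) (hu : AEStronglyMeasurable u μ)
    (hwu : Integrable (fun x => (w x * u x) ^ 2) μ) :
    Integrable (fun x => u x ^ 2) μ ∧ ∫ x, u x ^ 2 ∂μ ≤ k⁻¹ ^ 2 * ∫ x, (w x * u x) ^ 2 ∂μ := by
  refine integrable_and_integral_le_of_le_mul (hu.pow 2) (ae_of_all _ fun x => sq_nonneg _) ?_ hwu
  filter_upwards [hw] with x hx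
  refine sq_le_mul_sq_of_abs_le ?_
  rw [abs_mul, ← mul_assoc, inv_mul_eq_div, div_mul_eq_mul_div, le_div_iff₀ hk, mul_comm]
  exact mul_le_mul_of_nonneg_right hx (abs_nonneg _)

theorem MeasureTheory.MemLp.eLpNorm_two_eq_ofReal_sqrt {f : α → ℝ} (hf : MemLp f 2 μ) :
    eLpNorm f 2 μ = ENNReal.ofReal √(∫ x, f x ^ 2 ∂μ) := by
  rw [hf.eLpNorm_eq_integral_rpow_norm two_ne_zero ENNReal.ofNat_ne_top, Real.sqrt_eq_rpow]
  norm_num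

theorem eLpNorm_two_le_of_integral_sq_le {u g₁ g₂ : α → ℝ} {C : ℝ} (hC : 0 ≤ C)
    (hu : MemLp u 2 μ) (hg₁ : MemLp g₁ 2 μ) (hg₂ : MemLp g₂ 2 μ)
    (h : ∫ x, u x ^ 2 ∂μ ≤ C ^ 2 * (∫ x, g₁ x ^ 2 ∂μ + ∫ x, g₂ x ^ 2 ∂μ)) :
    eLpNorm u 2 μ ≤ ENNReal.ofReal C * (eLpNorm g₁ 2 μ + eLpNorm g₂ 2 μ) := by
  set A := ∫ x, g₁ x ^ 2 ∂μ
  set B := ∫ x, g₂ x ^ 2 ∂μ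
  have hA : 0 ≤ A := integral_nonneg fun x => sq_nonneg _
  have hB : 0 ≤ B := integral_nonneg fun x => sq_nonneg _
  rw [hu.eLpNorm_two_eq_ofReal_sqrt, hg₁.eLpNorm_two_eq_ofReal_sqrt,
    hg₂.eLpNorm_two_eq_ofReal_sqrt, ← ENNReal.ofReal_add (by positivity) (by positivity),
    ← ENNReal.ofReal_mul hC]
  refine ENNReal.ofReal_le_ofReal (Real.sqrt_le_iff.2 ⟨by positivity, h.trans ?_⟩)
  rw [mul_pow]
  gcongr
  nlinarith [Real.sq_sqrt hA, Real.sq_sqrt hB, Real.sqrt_nonneg A, Real.sqrt_nonneg B]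

end Lp

theorem setIntegral_sq_mono_set {f : ℝ → ℝ} {s t : Set ℝ} (hst : s ⊆ t)
    (hf : IntegrableOn (fun x => f x ^ 2) t) : ∫ x in s, f x ^ 2 ≤ ∫ x in t, f x ^ 2 :=
  setIntegral_mono_set hf (ae_of_all _ fun _ => sq_nonneg _) hst.eventuallyLE

theorem integrableOn_Ioc_and_setIntegral_le_of_forall_Ioo {f : ℝ → ℝ} {a b K : ℝ} (hab : a < b)
    (hf₀ : ∀ x ∈ Ioc a b, 0 ≤ f x) (hfi : ∀ ε ∈ Ioo a b, IntegrableOn f (Ioc ε b))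
    (hK : ∀ ε ∈ Ioo a b, ∫ x in Ioc ε b, f x ≤ K) :
    IntegrableOn f (Ioc a b) ∧ ∫ x in Ioc a b, f x ≤ K := by
  obtain ⟨ε, -, hε, hε_lim⟩ := exists_seq_strictAnti_tendsto' hab
  have hsub : ∀ n, Ioc (ε n) b ⊆ Ioc a b := fun n => Ioc_subset_Ioc_left (hε n).1.le
  have hnorm : ∀ n, ∫ x in Ioc (ε n) b, ‖f x‖ = ∫ x in Ioc (ε n) b, f x := fun n =>
    setIntegral_congr_fun measurableSet_Ioc fun x hx => Real.norm_of_nonneg (hf₀ x (hsub n hx))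
  have hint : IntegrableOn f (Ioc a b) :=
    integrableOn_Ioc_of_intervalIntegral_norm_bounded_left (l := atTop) (fun n => hfi _ (hε n))
      hε_lim (Eventually.of_forall fun n => (hnorm n).trans_le (hK _ (hε n)))
  have hlim : Tendsto (fun n => ∫ x in Ioc (ε n) b, f x) atTop (𝓝 (∫ x in Ioc a b, f x)) := by
    have := (aecover_Ioc_of_Ioc (μ := volume) hε_lim
      tendsto_const_nhds).integral_tendsto_of_countably_generated hint
    simpa only [Measure.restrict_restrict measurableSet_Ioc, inter_eq_left.2 (hsub _)] using this
  exact ⟨hint, le_of_tendsto hlim (Eventually.of_forall fun n => hK _ (hε n))⟩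

theorem setIntegral_Ioc_sq_le {u : ℝ → ℝ} {ε y : ℝ} (hε : 0 ≤ ε) (hεy : ε ≤ y)
    (hu : DifferentiableOn ℝ u (Icc ε y))
    (hu' : IntegrableOn (fun x => (x * deriv u x) ^ 2) (Ioc ε y)) :
    ∫ x in Ioc ε y, u x ^ 2 ≤ 2 * y * u y ^ 2 + 4 * ∫ x in Ioc ε y, (x * deriv u x) ^ 2 := by
  have hu2 : IntegrableOn (fun x => u x ^ 2) (Ioc ε y) :=
    ((hu.continuousOn.pow 2).integrableOn_Icc).mono_set Ioc_subset_Icc_self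
  have key :
      ∫ x in ε..y, (u x ^ 2 / 2 - 2 * (x * deriv u x) ^ 2) ≤ y * u y ^ 2 - ε * u ε ^ 2 := by
    refine intervalIntegral.integral_le_sub_of_hasDeriv_right_of_le (g := fun x => x * u x ^ 2)
      (g' := fun x => u x ^ 2 + x * (2 * u x * deriv u x)) hεy
      (continuousOn_id.mul (hu.continuousOn.pow 2)) (fun x hx => ?_) ?_ (fun x _ => ?_)
    · have hx' := (hu.differentiableAt (Icc_mem_nhds hx.1 hx.2)).hasDerivAt
      exact (((hasDerivAt_id' x).mul (hx'.fun_pow 2)).congr_deriv (by norm_num)).hasDerivWithinAt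
    · rw [integrableOn_Icc_iff_integrableOn_Ioc]
      exact (hu2.div_const 2).sub (hu'.const_mul 2)
    · nlinarith [sq_nonneg (u x + 2 * (x * deriv u x))]
  rw [intervalIntegral.integral_of_le hεy, integral_sub (hu2.div_const 2) (hu'.const_mul 2),
    integral_div, integral_const_mul] at key
  nlinarith [mul_nonneg hε (sq_nonneg (u ε))]

theorem integrableOn_Ioc_zero_sq_and_setIntegral_le {u : ℝ → ℝ} {y : ℝ} (hy : 0 < y)
    (hu : DifferentiableOn ℝ u (Ioc 0 y))
    (hu' : IntegrableOn (fun x => (x * deriv u x) ^ 2) (Ioc 0 y)) :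
    IntegrableOn (fun x => u x ^ 2) (Ioc 0 y) ∧
      ∫ x in Ioc 0 y, u x ^ 2 ≤ 2 * y * u y ^ 2 + 4 * ∫ x in Ioc 0 y, (x * deriv u x) ^ 2 := by
  have hsub : ∀ ε ∈ Ioo 0 y, Icc ε y ⊆ Ioc 0 y := fun ε hε =>
    (Icc_subset_Ioc_iff hε.2.le).2 ⟨hε.1, le_rfl⟩
  refine integrableOn_Ioc_and_setIntegral_le_of_forall_Ioo hy (fun x _ => sq_nonneg _)
    (fun ε hε => ((hu.mono (hsub ε hε)).continuousOn.pow 2).integrableOn_Icc.mono_set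
      Ioc_subset_Icc_self) (fun ε hε => ?_)
  have hIoc : Ioc ε y ⊆ Ioc 0 y := Ioc_subset_Icc_self.trans (hsub ε hε)
  calc ∫ x in Ioc ε y, u x ^ 2
      ≤ 2 * y * u y ^ 2 + 4 * ∫ x in Ioc ε y, (x * deriv u x) ^ 2 :=
        setIntegral_Ioc_sq_le hε.1.le hε.2.le (hu.mono (hsub ε hε)) (hu'.mono_set hIoc)
    _ ≤ 2 * y * u y ^ 2 + 4 * ∫ x in Ioc 0 y, (x * deriv u x) ^ 2 := by
        gcongr
        exact ae_of_all _ fun x => sq_nonneg _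

theorem exists_mem_Ioc_mul_sq_le_two_mul_setIntegral {u : ℝ → ℝ} {δ : ℝ} (hδ : 0 < δ)
    (hu : IntegrableOn (fun x => u x ^ 2) (Ioc (δ / 2) δ)) :
    ∃ y ∈ Ioc (δ / 2) δ, y * u y ^ 2 ≤ 2 * ∫ x in Ioc (δ / 2) δ, u x ^ 2 := by
  obtain ⟨y, hy, hyu⟩ := exists_le_setAverage (by simp; linarith) (by simp) hu
  rw [setAverage_eq, Real.volume_real_Ioc_of_le (by linarith), smul_eq_mul,
    show δ - δ / 2 = δ / 2 by ring] at hyu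
  refine ⟨y, hy, ?_⟩
  calc y * u y ^ 2 ≤ δ * ((δ / 2)⁻¹ * ∫ x in Ioc (δ / 2) δ, u x ^ 2) := by
        gcongr
        exact hy.2
    _ = 2 * ∫ x in Ioc (δ / 2) δ, u x ^ 2 := by field_simp

theorem integrableOn_Ioi_zero_sq_and_setIntegral_le {u w₁ w₂ : ℝ → ℝ} {c k δ : ℝ} (hδ : 0 < δ)
    (hk : 0 < k) (hw₁ : ∀ x ∈ Ioc 0 δ, x ≤ c * |w₁ x|) (hw₂ : ∀ x, δ / 2 ≤ x → k ≤ |w₂ x|)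
    (hu : DifferentiableOn ℝ u (Ioi 0))
    (h₁ : IntegrableOn (fun x => (w₁ x * deriv u x) ^ 2) (Ioi 0))
    (h₂ : IntegrableOn (fun x => (w₂ x * u x) ^ 2) (Ioi 0)) :
    IntegrableOn (fun x => u x ^ 2) (Ioi 0) ∧
      ∫ x in Ioi 0, u x ^ 2 ≤ 4 * c ^ 2 * (∫ x in Ioi 0, (w₁ x * deriv u x) ^ 2) +
        5 * k⁻¹ ^ 2 * ∫ x in Ioi 0, (w₂ x * u x) ^ 2 := by
  have hδ₂ : Ioi (δ / 2) ⊆ Ioi 0 := Ioi_subset_Ioi (by positivity)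
  obtain ⟨hfar_int, hfar⟩ : IntegrableOn (fun x => u x ^ 2) (Ioi (δ / 2)) volume ∧
      ∫ x in Ioi (δ / 2), u x ^ 2 ≤ k⁻¹ ^ 2 * ∫ x in Ioi (δ / 2), (w₂ x * u x) ^ 2 :=
    integrable_sq_and_integral_sq_le_of_le_abs hk
    ((ae_restrict_mem measurableSet_Ioi).mono fun x (hx : δ / 2 < x) => hw₂ x hx.le)
    ((hu.continuousOn.mono hδ₂).aestronglyMeasurable measurableSet_Ioi) (h₂.mono_set hδ₂)
  obtain ⟨y, ⟨hy₁, hy₂⟩, hyu⟩ :=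
    exists_mem_Ioc_mul_sq_le_two_mul_setIntegral hδ (hfar_int.mono_set Ioc_subset_Ioi_self)
  have hy₀ : 0 < y := by linarith
  obtain ⟨hxu'_int, hxu'⟩ : IntegrableOn (fun x => (x * deriv u x) ^ 2) (Ioc 0 y) ∧
      ∫ x in Ioc 0 y, (x * deriv u x) ^ 2 ≤ c ^ 2 * ∫ x in Ioc 0 y, (w₁ x * deriv u x) ^ 2 := by
    refine integrable_and_integral_le_of_le_mul
      ((measurable_id.mul (measurable_deriv u)).pow_const 2).aestronglyMeasurable
      (ae_of_all _ fun x => sq_nonneg _) ?_ (h₁.mono_set Ioc_subset_Ioi_self)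
    filter_upwards [ae_restrict_mem measurableSet_Ioc] with x hx
    refine sq_le_mul_sq_of_abs_le ?_
    rw [abs_mul, abs_mul, ← mul_assoc, abs_of_pos hx.1]
    exact mul_le_mul_of_nonneg_right (hw₁ x ⟨hx.1, hx.2.trans hy₂⟩) (abs_nonneg _)
  obtain ⟨hnear_int, hnear⟩ :=
    integrableOn_Ioc_zero_sq_and_setIntegral_le hy₀ (hu.mono Ioc_subset_Ioi_self) hxu'_int
  have hsplit : Ioc 0 y ∪ Ioi y = Ioi 0 := Ioc_union_Ioi_eq_Ioi hy₀.le
  have hy_far : Ioi y ⊆ Ioi (δ / 2) := Ioi_subset_Ioi hy₁.le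
  refine ⟨hsplit ▸ hnear_int.union (hfar_int.mono_set hy_far), ?_⟩
  rw [← hsplit, setIntegral_union (Ioc_disjoint_Ioi le_rfl) measurableSet_Ioi hnear_int
    (hfar_int.mono_set hy_far), hsplit]
  have h₁_mono := mul_le_mul_of_nonneg_left
    (setIntegral_sq_mono_set (s := Ioc 0 y) Ioc_subset_Ioi_self h₁) (sq_nonneg c)
  have h₂_mono := mul_le_mul_of_nonneg_left (setIntegral_sq_mono_set hδ₂ h₂) (sq_nonneg k⁻¹)
  linarith [setIntegral_sq_mono_set hy_far hfar_int,
    setIntegral_sq_mono_set (s := Ioc (δ / 2) δ) Ioc_subset_Ioi_self hfar_int]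

theorem eventually_le_mul_of_deriv_pos {h : ℝ → ℝ} (h₀ : h 0 = 0) (hd : 0 < deriv h 0) :
    ∀ᶠ x in 𝓝[>] 0, x ≤ 2 / deriv h 0 * h x := by
  have hslope : Tendsto (fun x => h x / x) (𝓝[>] 0) (𝓝 (deriv h 0)) := by
    simpa [h₀, div_eq_inv_mul] using
      (differentiableAt_of_deriv_ne_zero hd.ne').hasDerivAt.tendsto_slope_zero_right
  filter_upwards [hslope.eventually (eventually_gt_nhds (half_lt_self hd)), self_mem_nhdsWithin]
    with x hx (hx₀ : 0 < x)
  rw [lt_div_iff₀ hx₀] at hx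
  rw [div_mul_eq_mul_div, le_div_iff₀ hd]
  linarith

theorem exists_pos_le_of_continuousOn_Ici_of_liminf_pos {h : ℝ → ℝ} {a : ℝ}
    (hcont : ContinuousOn h (Ici a)) (hpos : ∀ x, a ≤ x → 0 < h x)
    (hbdd : IsBoundedUnder (· ≥ ·) atTop h) (hlim : 0 < atTop.liminf h) :
    ∃ m, 0 < m ∧ ∀ x, a ≤ x → m ≤ h x := by
  obtain ⟨b, hb⟩ := eventually_atTop.1 (eventually_lt_of_lt_liminf (half_lt_self hlim) hbdd)
  obtain ⟨x₀, hx₀, hmin⟩ := isCompact_Icc.exists_isMinOn (nonempty_Icc.2 (le_max_right b a))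
    (hcont.mono Icc_subset_Ici_self)
  refine ⟨min (h x₀) (atTop.liminf h / 2), lt_min (hpos x₀ hx₀.1) (half_pos hlim), fun x hx => ?_⟩
  rcases le_or_gt x (max b a) with hxb | hxb
  · exact (min_le_left _ _).trans (hmin ⟨hx, hxb⟩)
  · exact (min_le_right _ _).trans (hb x ((le_max_left b a).trans hxb.le)).le

namespace ShoreFn

variable {h : ℝ → ℝ}

theorem exists_le_mul_abs (hh : ShoreFn h) :
    ∃ c δ : ℝ, 0 < δ ∧ ∀ x ∈ Ioc 0 δ, x ≤ c * |h x| := by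
  obtain ⟨-, -, h₀, hd, hpos, -⟩ := hh
  obtain ⟨δ, hδ, hsub⟩ :=
    mem_nhdsGT_iff_exists_Ioc_subset.1 (eventually_le_mul_of_deriv_pos h₀ hd)
  refine ⟨2 / deriv h 0, δ, hδ, fun x hx => ?_⟩
  rw [abs_of_pos (hpos x hx.1)]
  exact hsub hx

theorem exists_pos_le (hh : ShoreFn h) {a : ℝ} (ha : 0 < a) :
    ∃ m, 0 < m ∧ ∀ x, a ≤ x → m ≤ h x := by
  obtain ⟨hcont, ⟨M, hM⟩, -, -, hpos, hlim⟩ := hh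
  refine exists_pos_le_of_continuousOn_Ici_of_liminf_pos
    (hcont.continuousOn.mono (Ici_subset_Ici.2 ha.le)) (fun x hx => hpos x (ha.trans_le hx))
    (isBoundedUnder_of_eventually_ge (a := -M) ?_) hlim
  filter_upwards [eventually_ge_atTop 0] with x hx
  exact neg_le_of_abs_le (hM x hx)

end ShoreFn

theorem hardy_L2_general (h : ℝ → ℝ) (hh : ShoreFn h) (σ₁ : ℝ) (hσ₁ : 0 ≤ σ₁) :
    ∃ C : ℝ, 0 < C ∧ ∀ u : ℝ → ℝ, DifferentiableOn ℝ u (Ioi 0) →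
      MemLp (fun x => h x * deriv u x) 2 (volume.restrict (Ioi 0)) →
      MemLp (fun x => h x ^ σ₁ * u x) 2 (volume.restrict (Ioi 0)) →
      MemLp u 2 (volume.restrict (Ioi 0)) ∧
        eLpNorm u 2 (volume.restrict (Ioi 0)) ≤
          ENNReal.ofReal C *
            (eLpNorm (fun x => h x * deriv u x) 2 (volume.restrict (Ioi 0)) +
              eLpNorm (fun x => h x ^ σ₁ * u x) 2 (volume.restrict (Ioi 0))) := by
  obtain ⟨c, δ, hδ, hw₁⟩ := hh.exists_le_mul_abs
  obtain ⟨m, hm, hhm⟩ := hh.exists_pos_le (half_pos hδ)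
  have hw₂ : ∀ x, δ / 2 ≤ x → m ^ σ₁ ≤ |h x ^ σ₁| := fun x hx =>
    (rpow_le_rpow hm.le (hhm x hx) hσ₁).trans (le_abs_self _)
  set K := 4 * c ^ 2 + 5 * (m ^ σ₁)⁻¹ ^ 2
  have hK : 0 < K := by positivity
  refine ⟨√K, Real.sqrt_pos.2 hK, fun u hu h₁ h₂ => ?_⟩
  obtain ⟨hu_int, hu_le⟩ := integrableOn_Ioi_zero_sq_and_setIntegral_le hδ (by positivity) hw₁
    hw₂ hu ((memLp_two_iff_integrable_sq h₁.1).1 h₁) ((memLp_two_iff_integrable_sq h₂.1).1 h₂)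
  have hmem : MemLp u 2 (volume.restrict (Ioi 0)) := (memLp_two_iff_integrable_sq
    (hu.continuousOn.aestronglyMeasurable measurableSet_Ioi)).2 hu_int
  refine ⟨hmem, eLpNorm_two_le_of_integral_sq_le (Real.sqrt_nonneg K) hmem h₁ h₂ ?_⟩
  have h₁_nonneg : 0 ≤ ∫ x in Ioi 0, (h x * deriv u x) ^ 2 := integral_nonneg fun _ => sq_nonneg _
  have h₂_nonneg : 0 ≤ ∫ x in Ioi 0, (h x ^ σ₁ * u x) ^ 2 := integral_nonneg fun _ => sq_nonneg _
  rw [sq_sqrt hK.le]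
  nlinarith [mul_nonneg (sq_nonneg c) h₂_nonneg, mul_nonneg (sq_nonneg (m ^ σ₁)⁻¹) h₁_nonneg]

theorem hardy_L2 (h : ℝ → ℝ) (hh : ShoreFn h) (σ₁ : ℝ) (hσ₁ : 0 ≤ σ₁) (hσ₁' : σ₁ ≤ 1) :
    ∃ C : ℝ, 0 < C ∧ ∀ u : ℝ → ℝ, DifferentiableOn ℝ u (Ioi 0) →
      MemLp (fun x => h x * deriv u x) 2 (volume.restrict (Ioi 0)) →
      MemLp (fun x => h x ^ σ₁ * u x) 2 (volume.restrict (Ioi 0)) →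
      MemLp u 2 (volume.restrict (Ioi 0)) ∧
        eLpNorm u 2 (volume.restrict (Ioi 0)) ≤
          ENNReal.ofReal C *
            (eLpNorm (fun x => h x * deriv u x) 2 (volume.restrict (Ioi 0)) +
              eLpNorm (fun x => h x ^ σ₁ * u x) 2 (volume.restrict (Ioi 0))) :=
  hardy_L2_general h hh σ₁ hσ₁
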